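/- arXiv:cs/0004005 — 3 statements merged into one kernel-verified Lean document; each statement's English description precedes it below -/
import Mathlib

section
/- Let h(s) = r·ln(1 + (p/(1-p))·s^k) - α·s for s ∈ [0,1], where k ≥ 2 is an integer, 0 < p < 1, r > 0, α > 0. Then the second derivative of h satisfies h''(s) = r·k·p·s^(k-2)·[(k-1)(1-p) - p·s^k] / (1-p+p·s^k)², and if k ≥ 1/(1-p) then h''(s) ≥ 0 for all s ∈ [0,1]. -/
/-- For `h(s) = r ln(1 + (p/(1-p)) s^k) - α s`, the second derivative is
`h''(s) = r k p s^(k-2) [(k-1)(1-p) - p s^k] / (1-p+p s^k)^2` on `[0,1]`, and it is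
nonnegative there whenever `k ≥ 1/(1-p)`. -/
theorem second_derivative_of_exponent_function
    (k : ℕ) (p r α : ℝ) (hk : 2 ≤ k) (hp0 : 0 < p) (hp1 : p < 1)
    (hr : 0 < r) (hα : 0 < α) :
    ∀ s ∈ Set.Icc (0 : ℝ) 1,
      deriv (deriv (fun s : ℝ => r * Real.log (1 + p / (1 - p) * s ^ k) - α * s)) s
        = r * k * p * s ^ (k - 2) * ((k - 1) * (1 - p) - p * s ^ k)
            / (1 - p + p * s ^ k) ^ 2
      ∧ ((k : ℝ) ≥ 1 / (1 - p) →
          0 ≤ deriv (deriv (fun s : ℝ => r * Real.log (1 + p / (1 - p) * s ^ k) - α * s)) s) := by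
  obtain ⟨m, rfl⟩ : ∃ m, k = m + 2 := ⟨k - 2, by omega⟩
  have hp : (0:ℝ) < 1 - p := by linarith
  set c : ℝ := p / (1 - p) with hc
  have hcpos : 0 < c := div_pos hp0 hp
  set U : Set ℝ := {s : ℝ | 0 < 1 + c * s ^ (m+2)} with hU
  have hUopen : IsOpen U :=
    isOpen_lt continuous_const (by continuity)
  -- first derivative on U
  set g1 : ℝ → ℝ := fun s => r * ((c * ((m+2) * s ^ (m+1))) / (1 + c * s ^ (m+2))) - α with hg1
  have hD1 : ∀ x ∈ U, HasDerivAt (fun s : ℝ => r * Real.log (1 + c * s ^ (m+2)) - α * s)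
      (g1 x) x := by
    intro x hx
    have hxpos : 0 < 1 + c * x ^ (m+2) := hx
    have hpow : HasDerivAt (fun s : ℝ => 1 + c * s ^ (m+2)) (c * ((m+2) * x ^ (m+1))) x := by
      have := ((hasDerivAt_pow (m+2) x).const_mul c).const_add 1
      simpa using this
    have hlog := (hpow.log (ne_of_gt hxpos)).const_mul r
    have hlin : HasDerivAt (fun s : ℝ => α * s) α x := by
      simpa using (hasDerivAt_id x).const_mul α
    exact hlog.sub hlin
  -- deriv g = g1 on U
  have hderiv1 : ∀ x ∈ U,
      deriv (fun s : ℝ => r * Real.log (1 + c * s ^ (m+2)) - α * s) x = g1 x :=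
    fun x hx => (hD1 x hx).deriv
  intro s hs
  have hsU : s ∈ U := by
    have h1 : 0 ≤ c * s ^ (m+2) := mul_nonneg hcpos.le (pow_nonneg hs.1 _)
    simpa [hU, Set.mem_setOf_eq] using by linarith
  have hev : deriv (fun s : ℝ => r * Real.log (1 + c * s ^ (m+2)) - α * s) =ᶠ[nhds s] g1 :=
    Filter.eventuallyEq_of_mem (hUopen.mem_nhds hsU) hderiv1
  have hspos : 0 < 1 + c * s ^ (m+2) := hsU
  -- second derivative
  have hpow' : HasDerivAt (fun t : ℝ => c * ((m+2) * t ^ (m+1))) (c * ((m+2) * ((m+1) * s ^ m))) s := by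
    have := ((hasDerivAt_pow (m+1) s).const_mul ((m:ℝ)+2)).const_mul c
    refine this.congr_deriv ?_
    push_cast
    simp only [Nat.add_sub_cancel]
  have hden : HasDerivAt (fun t : ℝ => 1 + c * t ^ (m+2)) (c * ((m+2) * s ^ (m+1))) s := by
    have := ((hasDerivAt_pow (m+2) s).const_mul c).const_add 1
    simpa using this
  have hg1d : HasDerivAt g1
      (r * ((c * ((m+2) * ((m+1) * s ^ m)) * (1 + c * s ^ (m+2))
        - c * ((m+2) * s ^ (m+1)) * (c * ((m+2) * s ^ (m+1)))) / (1 + c * s ^ (m+2)) ^ 2)) s := by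
    have := ((hpow'.div hden (ne_of_gt hspos)).const_mul r).sub_const α
    simpa [hg1] using this
  have key : deriv (deriv (fun s : ℝ => r * Real.log (1 + c * s ^ (m+2)) - α * s)) s
      = r * ((c * ((m+2) * ((m+1) * s ^ m)) * (1 + c * s ^ (m+2))
        - c * ((m+2) * s ^ (m+1)) * (c * ((m+2) * s ^ (m+1)))) / (1 + c * s ^ (m+2)) ^ 2) := by
    rw [hev.deriv_eq]
    exact hg1d.deriv
  have hden2 : (0:ℝ) < 1 - p + p * s ^ (m+2) := by
    have h1 : 0 ≤ p * s ^ (m+2) := mul_nonneg hp0.le (pow_nonneg hs.1 _)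
    linarith
  have heq : r * ((c * ((m+2) * ((m+1) * s ^ m)) * (1 + c * s ^ (m+2))
        - c * ((m+2) * s ^ (m+1)) * (c * ((m+2) * s ^ (m+1)))) / (1 + c * s ^ (m+2)) ^ 2)
      = r * (m+2 : ℕ) * p * s ^ ((m+2) - 2) * (((m+2 : ℕ) - 1) * (1 - p) - p * s ^ (m+2))
            / (1 - p + p * s ^ (m+2)) ^ 2 := by
    have h2 : (1:ℝ) + c * s ^ (m+2) ≠ 0 := ne_of_gt hspos
    have h3 : (1:ℝ) - p + p * s ^ (m+2) ≠ 0 := ne_of_gt hden2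
    rw [hc] at h2 ⊢
    simp only [Nat.add_sub_cancel]
    push_cast
    field_simp
    ring
  refine ⟨by rw [key, heq], ?_⟩
  intro hge
  rw [key, heq]
  apply div_nonneg _ (sq_nonneg _)
  have hsk : s ^ (m+2) ≤ 1 := pow_le_one₀ hs.1 hs.2
  have h1 : (1:ℝ) ≤ ((m:ℝ)+2) * (1 - p) := by
    rw [ge_iff_le, div_le_iff₀ hp] at hge
    push_cast at hge
    linarith
  have hnum : (0:ℝ) ≤ ((m+2 : ℕ) - 1 : ℝ) * (1 - p) - p * s ^ (m+2) := by
    push_cast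
    nlinarith [mul_nonneg hp0.le (sub_nonneg.mpr hsk)]
  have : (0:ℝ) ≤ s ^ ((m+2) - 2) := pow_nonneg hs.1 _
  positivity
end

section
/- For an assignment pair (t_i, t_j) with similarity number S (i.e., agreeing on exactly S of the n variables), the probability that a single random constraint of Model RB is satisfied by both assignments equals (1-p)·C(S,k)/C(n,k) + [C(d^k-2,q)/C(d^k,q)]·(1 - C(S,k)/C(n,k)), where q = p·d^k. -/
open Finset

/-- A random constraint of Model RB with `n` variables, arity `k`, domain size `d`
and `q` forbidden tuples: a set of `k` of the `n` variables together with a set of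
`q` incompatible tuples of values for those variables. -/
def RBConstraint (n k d q : ℕ) : Type :=
  Σ s : {s : Finset (Fin n) // s.card = k},
    {F : Finset (↥s.1 → Fin d) // F.card = q}

noncomputable instance (n k d q : ℕ) : Fintype (RBConstraint n k d q) := by
  classical
  unfold RBConstraint
  infer_instance

/-- An assignment satisfies a constraint iff the induced tuple of values of the
constrained variables is not among the forbidden tuples. -/
def RBSatisfies {n k d q : ℕ} (a : Fin n → Fin d) (c : RBConstraint n k d q) : Prop :=
  (fun v : ↥c.1.1 => a v) ∉ c.2.1

noncomputable instance {n k d q : ℕ} {P : RBConstraint n k d q → Prop} :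
    Fintype {c : RBConstraint n k d q // P c} := by
  classical
  infer_instance


section Aux

open Finset

lemma count_avoid2 {β : Type*} [Fintype β] [DecidableEq β] (q : ℕ) (x y : β) :
    Fintype.card {F : Finset β // F.card = q ∧ x ∉ F ∧ y ∉ F}
      = (Fintype.card β - ({x, y} : Finset β).card).choose q := by
  classical
  rw [Fintype.card_subtype]
  have h : (univ.filter (fun F : Finset β => F.card = q ∧ x ∉ F ∧ y ∉ F))
      = ({x, y}ᶜ : Finset β).powersetCard q := by
    ext F
    simp only [mem_filter, mem_univ, true_and, Finset.mem_powersetCard]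
    constructor
    · rintro ⟨hc, hx, hy⟩
      refine ⟨fun z hz => ?_, hc⟩
      simp only [Finset.mem_compl, Finset.mem_insert, Finset.mem_singleton]
      rintro (rfl | rfl)
      · exact hx hz
      · exact hy hz
    · rintro ⟨hsub, hc⟩
      refine ⟨hc, fun hx => ?_, fun hy => ?_⟩
      · have := hsub hx; simp at this
      · have := hsub hy; simp at this
  rw [h, Finset.card_powersetCard, Finset.card_compl]

end Aux

/-- For an assignment pair agreeing on exactly `S` of the `n` variables, the
probability that a uniformly random Model RB constraint is satisfied by both
assignments equals
`(1-p)·C(S,k)/C(n,k) + (C(d^k-2,q)/C(d^k,q))·(1 - C(S,k)/C(n,k))`. -/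
theorem modelRB_pair_satisfaction_probability
    (n k d q S : ℕ) (p : ℝ)
    (hn : 2 ≤ n) (hk2 : 2 ≤ k) (hkn : k ≤ n) (hd : 2 ≤ d)
    (hp0 : 0 < p) (hp1 : p < 1)
    (hq : (q : ℝ) = p * (d : ℝ) ^ k) (hq2 : q ≤ d ^ k - 2)
    (a b : Fin n → Fin d)
    (hS : (Finset.univ.filter (fun i => a i = b i)).card = S) :
    (Fintype.card {c : RBConstraint n k d q // RBSatisfies a c ∧ RBSatisfies b c} : ℝ)
        / (Fintype.card (RBConstraint n k d q) : ℝ)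
      = (1 - p) * ((S.choose k : ℝ) / (n.choose k : ℝ))
        + (((d ^ k - 2).choose q : ℝ) / ((d ^ k).choose q : ℝ))
          * (1 - (S.choose k : ℝ) / (n.choose k : ℝ)) := by
  classical
  set A : Finset (Fin n) := univ.filter (fun i => a i = b i) with hA
  have hAS : A.card = S := hS
  have hSn : S ≤ n := by
    rw [← hAS]
    exact (Finset.card_filter_le _ _).trans (by simp)
  have hdk4 : 4 ≤ d ^ k := by
    calc (4 : ℕ) = 2 ^ 2 := rfl
    _ ≤ d ^ 2 := Nat.pow_le_pow_left hd 2
    _ ≤ d ^ k := Nat.pow_le_pow_right (by omega) hk2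
  have hqle : q ≤ d ^ k := by omega
  -- total count
  have htot : Fintype.card (RBConstraint n k d q) = n.choose k * (d ^ k).choose q := by
    have hcc : Fintype.card (RBConstraint n k d q)
        = Fintype.card (Σ s : {s : Finset (Fin n) // s.card = k},
            {F : Finset (↥s.1 → Fin d) // F.card = q}) :=
      Fintype.card_congr (Equiv.refl _)
    rw [hcc, Fintype.card_sigma]
    have hfib : ∀ s : {s : Finset (Fin n) // s.card = k},
        Fintype.card {F : Finset (↥s.1 → Fin d) // F.card = q} = (d ^ k).choose q := by
      intro s
      rw [Fintype.card_finset_len, Fintype.card_fun, Fintype.card_coe, s.2, Fintype.card_fin]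
    simp only [hfib, Finset.sum_const, smul_eq_mul]
    rw [Finset.card_univ, Fintype.card_finset_len, Fintype.card_fin]
  -- favorable count
  have hfav : Fintype.card {c : RBConstraint n k d q // RBSatisfies a c ∧ RBSatisfies b c}
      = S.choose k * (d ^ k - 1).choose q + (n.choose k - S.choose k) * (d ^ k - 2).choose q := by
    have e : {c : RBConstraint n k d q // RBSatisfies a c ∧ RBSatisfies b c}
        ≃ Σ s : {s : Finset (Fin n) // s.card = k},
            {F : Finset (↥s.1 → Fin d) //
              F.card = q ∧ (fun v : ↥s.1 => a v) ∉ F ∧ (fun v : ↥s.1 => b v) ∉ F} := by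
      refine ⟨fun c => ⟨c.1.1, ⟨c.1.2.1, c.1.2.2, c.2.1, c.2.2⟩⟩,
        fun x => ⟨⟨x.1, ⟨x.2.1, x.2.2.1⟩⟩, x.2.2.2.1, x.2.2.2.2⟩, ?_, ?_⟩
      · rintro ⟨⟨s, F⟩, h⟩; rfl
      · rintro ⟨s, F, h⟩; rfl
    rw [Fintype.card_congr e, Fintype.card_sigma]
    have hfib : ∀ s : {s : Finset (Fin n) // s.card = k},
        Fintype.card {F : Finset (↥s.1 → Fin d) //
            F.card = q ∧ (fun v : ↥s.1 => a v) ∉ F ∧ (fun v : ↥s.1 => b v) ∉ F}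
          = if s.1 ⊆ A then (d ^ k - 1).choose q else (d ^ k - 2).choose q := by
      intro s
      have hcf : Fintype.card (↥s.1 → Fin d) = d ^ k := by
        rw [Fintype.card_fun, Fintype.card_coe, s.2, Fintype.card_fin]
      rw [count_avoid2, hcf]
      by_cases h : s.1 ⊆ A
      · have heq : (fun v : ↥s.1 => a v) = (fun v : ↥s.1 => b v) := by
          funext v
          have hv := h v.2
          rw [hA, Finset.mem_filter] at hv
          exact hv.2
        have hp1 : ({(fun v : ↥s.1 => b v), (fun v : ↥s.1 => b v)} :
            Finset (↥s.1 → Fin d)).card = 1 := by simp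
        rw [if_pos h, heq, hp1]
      · have hne : (fun v : ↥s.1 => a v) ≠ (fun v : ↥s.1 => b v) := by
          intro heq
          apply h
          intro i hi
          rw [hA, Finset.mem_filter]
          exact ⟨Finset.mem_univ i, congrFun heq ⟨i, hi⟩⟩
        rw [if_neg h, Finset.card_insert_of_notMem (by simpa using hne),
          Finset.card_singleton]
    simp only [hfib]
    rw [← Finset.sum_subtype (Finset.powersetCard k (univ : Finset (Fin n)))
      (fun t => Finset.mem_powersetCard_univ)
      (fun t => if t ⊆ A then (d ^ k - 1).choose q else (d ^ k - 2).choose q)]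
    rw [Finset.sum_ite, Finset.sum_const, Finset.sum_const, smul_eq_mul, smul_eq_mul]
    have h1 : (Finset.powersetCard k (univ : Finset (Fin n))).filter (fun t => t ⊆ A)
        = Finset.powersetCard k A := by
      ext t
      rw [Finset.mem_filter, Finset.mem_powersetCard_univ, Finset.mem_powersetCard]
      tauto
    have htotal : (Finset.powersetCard k (univ : Finset (Fin n))).card = n.choose k := by
      rw [Finset.card_powersetCard, Finset.card_univ, Fintype.card_fin]
    have h1c : ((Finset.powersetCard k (univ : Finset (Fin n))).filter
        (fun t => t ⊆ A)).card = S.choose k := by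
      rw [h1, Finset.card_powersetCard, hAS]
    have h2c := Finset.card_filter_add_card_filter_not
      (s := Finset.powersetCard k (univ : Finset (Fin n))) (fun t => t ⊆ A)
    rw [h1c, htotal] at h2c
    rw [h1c]
    have hneg : ∀ m : ℕ, S.choose k + m = n.choose k → m = n.choose k - S.choose k := by
      omega
    rw [hneg _ h2c]
  -- casts and arithmetic
  have hNC : 0 < n.choose k := Nat.choose_pos hkn
  have hC0 : 0 < (d ^ k).choose q := Nat.choose_pos hqle
  have hSCle : S.choose k ≤ n.choose k := Nat.choose_le_choose k hSn
  have hid : (d ^ k) * (d ^ k - 1).choose q = (d ^ k).choose q * (d ^ k - q) := by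
    have h1 := Nat.add_one_mul_choose_eq (d ^ k - 1) q
    have h2 := Nat.choose_succ_right_eq (d ^ k) q
    have h3 : d ^ k - 1 + 1 = d ^ k := by omega
    rw [h3] at h1
    rw [h1, ← h2]
  have hdkR : (0 : ℝ) < (d : ℝ) ^ k := by positivity
  have hC0ne : ((d ^ k).choose q : ℝ) ≠ 0 := by positivity
  have hdkne' : ((d : ℝ)) ^ k ≠ 0 := ne_of_gt hdkR
  have hpq : p = (q : ℝ) / (d : ℝ) ^ k := by
    rw [hq]; field_simp
  have hcast : ((d : ℝ)) ^ k * ((d ^ k - 1).choose q : ℝ)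
      = ((d ^ k).choose q : ℝ) * (((d : ℝ)) ^ k - (q : ℝ)) := by
    have h := congrArg (fun m : ℕ => (m : ℝ)) hid
    push_cast [Nat.cast_sub hqle] at h
    linarith
  have hC1R : ((d ^ k - 1).choose q : ℝ) / ((d ^ k).choose q : ℝ) = 1 - p := by
    rw [div_eq_iff hC0ne, hpq]
    field_simp
    linarith [hcast]
  rw [htot, hfav]
  have hNCne : ((n.choose k : ℕ) : ℝ) ≠ 0 := by positivity
  have h1p : (1 : ℝ) - p = ((d ^ k - 1).choose q : ℝ) / ((d ^ k).choose q : ℝ) := hC1R.symm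
  rw [h1p]
  push_cast [Nat.cast_sub hSCle]
  field_simp
end

section
/- For integers 0 ≤ S ≤ n and k ≥ 1 with k ≤ n, writing s = S/n: C(S,k)/C(n,k) = ∏_{j=0}^{k-1} (S-j)/(n-j), and as n → ∞ with s fixed, C(S,k)/C(n,k) = s^k + g(s)/n + O(1/n²) where g(s) = k(k-1)(s^k - s^(k-1))/2. -/
open Finset

private lemma desc_cast (k m : ℕ) (hm : k ≤ m) :
    (m.descFactorial k : ℝ) = ∏ j ∈ Finset.range k, ((m : ℝ) - j) := by
  rw [Nat.descFactorial_eq_prod_range, Nat.cast_prod]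
  apply Finset.prod_congr rfl
  intro j hj
  rw [Finset.mem_range] at hj
  rw [Nat.cast_sub (le_trans (le_of_lt hj) hm)]

private lemma part1 (k : ℕ) (n S : ℕ) (hkn : k ≤ n) (hSn : S ≤ n) :
    (S.choose k : ℝ) / (n.choose k : ℝ)
      = ∏ j ∈ Finset.range k, ((S : ℝ) - j) / ((n : ℝ) - j) := by
  rcases lt_or_ge S k with hSk | hSk
  · rw [Nat.choose_eq_zero_of_lt hSk]
    rw [Finset.prod_eq_zero (Finset.mem_range.mpr hSk) (by simp)]
    simp
  · rw [Finset.prod_div_distrib, ← desc_cast k S hSk, ← desc_cast k n hkn,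
      Nat.descFactorial_eq_factorial_mul_choose, Nat.descFactorial_eq_factorial_mul_choose]
    push_cast
    rw [mul_div_mul_left]
    exact_mod_cast Nat.factorial_ne_zero k

private lemma key_expand (s : ℝ) (hs0 : 0 ≤ s) (hs1 : s ≤ 1)
    (e : ℕ → ℝ) (ε : ℝ) (hε0 : 0 ≤ ε) (hε1 : ε ≤ 1) :
    ∀ m, (∀ j < m, |e j| ≤ ε) →
      |(∏ j ∈ Finset.range m, (s + e j)) - s ^ m
        - s ^ (m - 1) * ∑ j ∈ Finset.range m, e j| ≤ (m : ℝ) ^ 2 * 2 ^ m * ε ^ 2 := by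
  intro m
  induction m with
  | zero => intro _; simp
  | succ r ih =>
    intro he
    match r, ih, he with
    | 0, _, he =>
      have h0 : (∏ j ∈ Finset.range 1, (s + e j)) - s ^ 1
          - s ^ (1 - 1) * ∑ j ∈ Finset.range 1, e j = 0 := by
        simp [Finset.prod_range_one, Finset.sum_range_one]
      rw [h0, abs_zero]
      positivity
    | (p + 1), ih, he =>
      set q := p + 1 with hqdef
      have hsum : |∑ j ∈ Finset.range q, e j| ≤ (q : ℝ) * ε := by
        calc |∑ j ∈ Finset.range q, e j| ≤ ∑ j ∈ Finset.range q, |e j| :=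
              Finset.abs_sum_le_sum_abs _ _
          _ ≤ ∑ _j ∈ Finset.range q, ε := by
              apply Finset.sum_le_sum
              intro j hj
              exact he j (lt_trans (Finset.mem_range.mp hj) (Nat.lt_succ_self q))
          _ = (q : ℝ) * ε := by simp [mul_comm]
      have heq : |e q| ≤ ε := he q (Nat.lt_succ_self q)
      have ihb := ih (fun j hj => he j (lt_trans hj (Nat.lt_succ_self q)))
      have hident :
          (∏ j ∈ Finset.range (q + 1), (s + e j)) - s ^ (q + 1)
            - s ^ (q + 1 - 1) * ∑ j ∈ Finset.range (q + 1), e j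
          = ((∏ j ∈ Finset.range q, (s + e j)) - s ^ q
              - s ^ (q - 1) * ∑ j ∈ Finset.range q, e j) * (s + e q)
            + s ^ (q - 1) * e q * ∑ j ∈ Finset.range q, e j := by
        rw [Finset.prod_range_succ, Finset.sum_range_succ]
        simp only [hqdef, Nat.add_sub_cancel]
        ring
      rw [hident]
      have hse : |s + e q| ≤ 2 := by
        calc |s + e q| ≤ |s| + |e q| := abs_add_le _ _
          _ ≤ 1 + 1 := by
              apply add_le_add _ (le_trans heq hε1)
              rw [abs_of_nonneg hs0]; exact hs1
          _ = 2 := by norm_num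
      have hsq : |s ^ (q - 1)| ≤ 1 := by
        rw [abs_of_nonneg (pow_nonneg hs0 _)]
        exact pow_le_one₀ hs0 hs1
      have h2q : (1 : ℝ) ≤ 2 ^ q := one_le_pow₀ (by norm_num)
      have hq0 : (1 : ℝ) ≤ (q : ℝ) := by exact_mod_cast Nat.one_le_iff_ne_zero.mpr (by omega)
      have hscal : (q : ℝ) ^ 2 * 2 ^ q * 2 + q ≤ ((q : ℝ) + 1) ^ 2 * 2 ^ (q + 1) := by
        have hpow : (2 : ℝ) ^ (q + 1) = 2 ^ q * 2 := pow_succ 2 q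
        rw [hpow]
        nlinarith [mul_nonneg (sub_nonneg.mpr h2q) (le_trans zero_le_one hq0), h2q, hq0]
      calc |_ + _| ≤ |((∏ j ∈ Finset.range q, (s + e j)) - s ^ q
              - s ^ (q - 1) * ∑ j ∈ Finset.range q, e j) * (s + e q)|
            + |s ^ (q - 1) * e q * ∑ j ∈ Finset.range q, e j| := abs_add_le _ _
        _ ≤ ((q : ℝ) ^ 2 * 2 ^ q * ε ^ 2) * 2 + 1 * ε * ((q : ℝ) * ε) := by
            apply add_le_add
            · rw [abs_mul]
              exact mul_le_mul ihb hse (abs_nonneg _) (by positivity)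
            · rw [abs_mul, abs_mul]
              apply mul_le_mul _ hsum (abs_nonneg _) (by positivity)
              exact mul_le_mul hsq heq (abs_nonneg _) zero_le_one
        _ = ((q : ℝ) ^ 2 * 2 ^ q * 2 + q) * ε ^ 2 := by ring
        _ ≤ (((q : ℝ) + 1) ^ 2 * 2 ^ (q + 1)) * ε ^ 2 :=
            mul_le_mul_of_nonneg_right hscal (sq_nonneg ε)
        _ = ((q + 1 : ℕ) : ℝ) ^ 2 * 2 ^ (q + 1) * ε ^ 2 := by push_cast; ring

set_option maxHeartbeats 2000000 in
/-- `C(S,k)/C(n,k) = ∏_{j<k} (S-j)/(n-j)`, and for `S = sn` with `s` fixed,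
`C(S,k)/C(n,k) = s^k + g(s)/n + O(1/n²)` where `g(s) = k(k-1)(s^k - s^(k-1))/2`. -/
theorem choose_ratio_product_and_asymptotics
    (k : ℕ) (hk : 1 ≤ k) (s : ℝ) (hs0 : 0 ≤ s) (hs1 : s ≤ 1) :
    (∀ n S : ℕ, k ≤ n → S ≤ n →
      (S.choose k : ℝ) / (n.choose k : ℝ)
        = ∏ j ∈ Finset.range k, ((S : ℝ) - j) / ((n : ℝ) - j)) ∧
    (∃ C : ℝ, 0 < C ∧ ∀ n S : ℕ, k ≤ n → (S : ℝ) = s * n →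
      |(S.choose k : ℝ) / (n.choose k : ℝ)
          - (s ^ k + (k * (k - 1) * (s ^ k - s ^ (k - 1)) / 2) / n)|
        ≤ C / (n : ℝ) ^ 2) := by
  constructor
  · intro n S hkn hSn; exact part1 k n S hkn hSn
  refine ⟨(k : ℝ) ^ 2 * 2 ^ k * (2 * k) ^ 2 + 2 * k ^ 3 + (2 + k ^ 2) * 4 * k ^ 2, by positivity, ?_⟩
  intro n S hkn hS
  have hn0 : 0 < (n : ℝ) := by
    have : 0 < n := lt_of_lt_of_le hk hkn
    exact_mod_cast this
  have hk1 : (1 : ℝ) ≤ (k : ℝ) := by exact_mod_cast hk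
  have hSn : S ≤ n := by
    have : (S : ℝ) ≤ (n : ℝ) := by
      rw [hS]; nlinarith
    exact_mod_cast this
  -- ratio in [0,1]
  have hchoosepos : 0 < (n.choose k : ℝ) := by exact_mod_cast Nat.choose_pos hkn
  have hr0 : 0 ≤ (S.choose k : ℝ) / (n.choose k : ℝ) := by positivity
  have hr1 : (S.choose k : ℝ) / (n.choose k : ℝ) ≤ 1 := by
    rw [div_le_one hchoosepos]
    exact_mod_cast Nat.choose_le_choose k hSn
  -- bound on G
  have hsk1 : s ^ k ≤ 1 := pow_le_one₀ hs0 hs1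
  have hsk1' : s ^ (k - 1) ≤ 1 := pow_le_one₀ hs0 hs1
  have hsk0 : 0 ≤ s ^ k := pow_nonneg hs0 _
  have hsk0' : 0 ≤ s ^ (k - 1) := pow_nonneg hs0 _
  have hG : |(k : ℝ) * ((k : ℝ) - 1) * (s ^ k - s ^ (k - 1)) / 2| ≤ (k : ℝ) ^ 2 := by
    rw [abs_div, abs_mul, abs_mul]
    have h1 : |(k : ℝ)| = (k : ℝ) := abs_of_nonneg (by positivity)
    have h2 : |(k : ℝ) - 1| ≤ (k : ℝ) := by rw [abs_le]; constructor <;> nlinarith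
    have h3 : |s ^ k - s ^ (k - 1)| ≤ 1 := by rw [abs_le]; constructor <;> nlinarith
    rw [h1, abs_of_pos (by norm_num : (0:ℝ) < 2)]
    rw [div_le_iff₀ (by norm_num : (0:ℝ) < 2)]
    have hb : (k:ℝ) * |(k:ℝ) - 1| * |s ^ k - s ^ (k - 1)| ≤ (k:ℝ) * (k:ℝ) * 1 := by
      have h0k : (0:ℝ) ≤ (k:ℝ) := by positivity
      exact mul_le_mul (mul_le_mul le_rfl h2 (abs_nonneg _) h0k) h3 (abs_nonneg _)
        (by positivity)
    nlinarith [sq_nonneg (k:ℝ)]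
  rcases lt_or_ge n (2 * k) with hn2k | hn2k
  · -- small n case
    have hb : |(S.choose k : ℝ) / (n.choose k : ℝ)
        - (s ^ k + (k * ((k:ℝ) - 1) * (s ^ k - s ^ (k - 1)) / 2) / n)| ≤ 2 + (k : ℝ) ^ 2 := by
      have hGn : |((k : ℝ) * ((k:ℝ) - 1) * (s ^ k - s ^ (k - 1)) / 2) / n| ≤ (k : ℝ) ^ 2 := by
        rw [abs_div, abs_of_pos hn0]
        calc |(k : ℝ) * ((k:ℝ) - 1) * (s ^ k - s ^ (k - 1)) / 2| / n
            ≤ (k : ℝ) ^ 2 / n := by gcongr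
          _ ≤ (k : ℝ) ^ 2 / 1 := by
              apply div_le_div_of_nonneg_left (by positivity) (by norm_num)
              exact_mod_cast Nat.one_le_iff_ne_zero.mpr (by omega)
          _ = (k : ℝ) ^ 2 := by norm_num
      have := abs_add_le ((S.choose k : ℝ) / (n.choose k : ℝ) - s ^ k)
        (-(((k : ℝ) * ((k:ℝ) - 1) * (s ^ k - s ^ (k - 1)) / 2) / n))
      rw [abs_neg] at this
      calc |(S.choose k : ℝ) / (n.choose k : ℝ)
          - (s ^ k + ((k : ℝ) * ((k:ℝ) - 1) * (s ^ k - s ^ (k - 1)) / 2) / n)|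
          = |((S.choose k : ℝ) / (n.choose k : ℝ) - s ^ k)
            + (-(((k : ℝ) * ((k:ℝ) - 1) * (s ^ k - s ^ (k - 1)) / 2) / n))| := by ring_nf
        _ ≤ |(S.choose k : ℝ) / (n.choose k : ℝ) - s ^ k|
            + |((k : ℝ) * ((k:ℝ) - 1) * (s ^ k - s ^ (k - 1)) / 2) / n| := this
        _ ≤ 2 + (k : ℝ) ^ 2 := by
            apply add_le_add _ hGn
            rw [abs_le]; constructor <;> nlinarith
    refine le_trans hb ?_
    rw [le_div_iff₀ (by positivity)]
    have hnk : (n : ℝ) ≤ 2 * k := by exact_mod_cast le_of_lt hn2k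
    have hnn : (0:ℝ) ≤ (n:ℝ) := le_of_lt hn0
    have hsq2 : (n:ℝ)^2 ≤ 4 * (k:ℝ)^2 := by nlinarith
    have hA := mul_le_mul_of_nonneg_left hsq2 (show (0:ℝ) ≤ 2 + (k:ℝ)^2 by positivity)
    have hB : (0:ℝ) ≤ (k:ℝ)^2 * 2^k * (2*(k:ℝ))^2 := by positivity
    have hC : (0:ℝ) ≤ 2 * (k:ℝ)^3 := by positivity
    linarith
  · -- large n case
    have hnk : 2 * (k : ℝ) ≤ (n : ℝ) := by exact_mod_cast hn2k
    set e : ℕ → ℝ := fun j => (j : ℝ) * (s - 1) / ((n : ℝ) - j) with he_def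
    have hden : ∀ j < k, (n : ℝ) / 2 ≤ (n : ℝ) - j := by
      intro j hj
      have : (j : ℝ) ≤ (k : ℝ) := by exact_mod_cast le_of_lt hj
      nlinarith
    have hdenpos : ∀ j < k, (0 : ℝ) < (n : ℝ) - j := by
      intro j hj
      have := hden j hj
      nlinarith
    have hε0 : (0 : ℝ) ≤ 2 * k / n := by positivity
    have hε1 : 2 * (k : ℝ) / n ≤ 1 := by rw [div_le_one hn0]; linarith
    have he : ∀ j < k, |e j| ≤ 2 * k / n := by
      intro j hj
      have hjk : (j : ℝ) ≤ (k : ℝ) := by exact_mod_cast le_of_lt hj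
      have hj0 : (0 : ℝ) ≤ (j : ℝ) := Nat.cast_nonneg j
      have hd := hden j hj
      have hdp := hdenpos j hj
      rw [he_def]
      simp only
      rw [abs_div, abs_mul, abs_of_pos hdp]
      have hnum : |(j : ℝ)| * |s - 1| ≤ (k : ℝ) := by
        rw [abs_of_nonneg hj0]
        have : |s - 1| ≤ 1 := by rw [abs_le]; constructor <;> nlinarith
        nlinarith
      calc |(j:ℝ)| * |s - 1| / ((n:ℝ) - j) ≤ (k : ℝ) / ((n:ℝ) - j) := by gcongr
        _ ≤ (k : ℝ) / ((n:ℝ)/2) := by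
            apply div_le_div_of_nonneg_left (by positivity) (by positivity) hd
        _ = 2 * k / n := by field_simp
    -- the ratio equals the product
    have hratio : (S.choose k : ℝ) / (n.choose k : ℝ)
        = ∏ j ∈ Finset.range k, (s + e j) := by
      rw [part1 k n S hkn hSn]
      apply Finset.prod_congr rfl
      intro j hj
      rw [Finset.mem_range] at hj
      have hdp := hdenpos j hj
      rw [hS, he_def]
      field_simp
      ring
    have hexp := key_expand s hs0 hs1 e (2 * k / n) hε0 hε1 k he
    rw [← hratio] at hexp
    -- second term
    have hsum_split : ∑ j ∈ Finset.range k, e j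
        = (s - 1) * ∑ j ∈ Finset.range k, (j : ℝ) / ((n : ℝ) - j) := by
      rw [Finset.mul_sum]
      apply Finset.sum_congr rfl
      intro j _
      rw [he_def]; ring
    have hsum_id : ∑ j ∈ Finset.range k, (j : ℝ) = (k : ℝ) * ((k : ℝ) - 1) / 2 := by
      have := Finset.sum_range_id_mul_two k
      have hcast : ((∑ i ∈ Finset.range k, i : ℕ) : ℝ) * 2 = (k : ℝ) * ((k : ℝ) - 1) := by
        rw [← Nat.cast_ofNat, ← Nat.cast_mul, this, Nat.cast_mul, Nat.cast_sub hk]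
        push_cast; ring
      push_cast at hcast
      linarith
    have hGsum : ((k : ℝ) * ((k:ℝ) - 1) * (s ^ k - s ^ (k - 1)) / 2) / n
        = s ^ (k - 1) * (s - 1) * ∑ j ∈ Finset.range k, (j : ℝ) / (n : ℝ) := by
      have hpow : s ^ k = s ^ (k - 1) * s := by
        conv_lhs => rw [show k = (k - 1) + 1 by omega]
        rw [pow_succ]
      rw [hpow, ← Finset.sum_div, hsum_id]
      field_simp
    have hsecond : |s ^ (k - 1) * ∑ j ∈ Finset.range k, e j
        - ((k : ℝ) * ((k:ℝ) - 1) * (s ^ k - s ^ (k - 1)) / 2) / n|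
        ≤ 2 * (k : ℝ) ^ 3 / (n : ℝ) ^ 2 := by
      rw [hGsum, hsum_split]
      have hfactor : s ^ (k - 1) * ((s - 1) * ∑ j ∈ Finset.range k, (j : ℝ) / ((n : ℝ) - j))
          - s ^ (k - 1) * (s - 1) * ∑ j ∈ Finset.range k, (j : ℝ) / (n : ℝ)
          = s ^ (k - 1) * (s - 1)
            * ∑ j ∈ Finset.range k, ((j : ℝ) / ((n : ℝ) - j) - (j : ℝ) / (n : ℝ)) := by
        rw [Finset.sum_sub_distrib]; ring
      rw [hfactor, abs_mul]
      have h1 : |s ^ (k - 1) * (s - 1)| ≤ 1 := by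
        rw [abs_mul]
        have : |s - 1| ≤ 1 := by rw [abs_le]; constructor <;> nlinarith
        have h2 : |s ^ (k-1)| ≤ 1 := by rw [abs_of_nonneg hsk0']; exact hsk1'
        nlinarith [abs_nonneg (s ^ (k-1)), abs_nonneg (s - 1)]
      have h2 : |∑ j ∈ Finset.range k, ((j : ℝ) / ((n : ℝ) - j) - (j : ℝ) / (n : ℝ))|
          ≤ (k : ℝ) * (2 * (k : ℝ) ^ 2 / (n : ℝ) ^ 2) := by
        calc |∑ j ∈ Finset.range k, ((j : ℝ) / ((n : ℝ) - j) - (j : ℝ) / (n : ℝ))|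
            ≤ ∑ j ∈ Finset.range k, |(j : ℝ) / ((n : ℝ) - j) - (j : ℝ) / (n : ℝ)| :=
              Finset.abs_sum_le_sum_abs _ _
          _ ≤ ∑ _j ∈ Finset.range k, 2 * (k : ℝ) ^ 2 / (n : ℝ) ^ 2 := by
              apply Finset.sum_le_sum
              intro j hj
              rw [Finset.mem_range] at hj
              have hdp := hdenpos j hj
              have hd := hden j hj
              have hjk : (j : ℝ) ≤ (k : ℝ) := by exact_mod_cast le_of_lt hj
              have hj0 : (0 : ℝ) ≤ (j : ℝ) := Nat.cast_nonneg j
              have heq : (j : ℝ) / ((n : ℝ) - j) - (j : ℝ) / (n : ℝ)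
                  = (j : ℝ) ^ 2 / (((n : ℝ) - j) * n) := by
                field_simp
                ring
              rw [heq, abs_of_nonneg (by positivity)]
              rw [div_le_div_iff₀ (by positivity) (by positivity)]
              have h5 : (j:ℝ)^2 ≤ (k:ℝ)^2 := by nlinarith
              have h6 : (n:ℝ)^2/2 ≤ ((n:ℝ)-(j:ℝ)) * (n:ℝ) := by nlinarith
              have h7 := mul_le_mul_of_nonneg_right h5 (sq_nonneg (n:ℝ))
              have h8 := mul_le_mul_of_nonneg_left h6 (show (0:ℝ) ≤ 2*(k:ℝ)^2 by positivity)
              linarith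
          _ = (k : ℝ) * (2 * (k : ℝ) ^ 2 / (n : ℝ) ^ 2) := by
              rw [Finset.sum_const, Finset.card_range, nsmul_eq_mul]
        
      calc |s ^ (k - 1) * (s - 1)|
            * |∑ j ∈ Finset.range k, ((j : ℝ) / ((n : ℝ) - j) - (j : ℝ) / (n : ℝ))|
          ≤ 1 * ((k : ℝ) * (2 * (k : ℝ) ^ 2 / (n : ℝ) ^ 2)) :=
            mul_le_mul h1 h2 (abs_nonneg _) zero_le_one
        _ = 2 * (k : ℝ) ^ 3 / (n : ℝ) ^ 2 := by ring
    -- combine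
    have htri : |(S.choose k : ℝ) / (n.choose k : ℝ)
        - (s ^ k + ((k : ℝ) * ((k:ℝ) - 1) * (s ^ k - s ^ (k - 1)) / 2) / n)|
        ≤ (k : ℝ) ^ 2 * 2 ^ k * (2 * k / n) ^ 2 + 2 * (k : ℝ) ^ 3 / (n : ℝ) ^ 2 := by
      have := abs_add_le
        ((S.choose k : ℝ) / (n.choose k : ℝ) - s ^ k
          - s ^ (k - 1) * ∑ j ∈ Finset.range k, e j)
        (s ^ (k - 1) * ∑ j ∈ Finset.range k, e j
          - ((k : ℝ) * ((k:ℝ) - 1) * (s ^ k - s ^ (k - 1)) / 2) / n)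
      calc |(S.choose k : ℝ) / (n.choose k : ℝ)
          - (s ^ k + ((k : ℝ) * ((k:ℝ) - 1) * (s ^ k - s ^ (k - 1)) / 2) / n)|
          = |((S.choose k : ℝ) / (n.choose k : ℝ) - s ^ k
              - s ^ (k - 1) * ∑ j ∈ Finset.range k, e j)
            + (s ^ (k - 1) * ∑ j ∈ Finset.range k, e j
              - ((k : ℝ) * ((k:ℝ) - 1) * (s ^ k - s ^ (k - 1)) / 2) / n)| := by
            congr 1
            ring
        _ ≤ _ := this
        _ ≤ (k : ℝ) ^ 2 * 2 ^ k * (2 * k / n) ^ 2 + 2 * (k : ℝ) ^ 3 / (n : ℝ) ^ 2 :=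
            add_le_add hexp hsecond
    refine le_trans htri ?_
    have hrw : (k : ℝ) ^ 2 * 2 ^ k * (2 * k / n) ^ 2
        = (k : ℝ) ^ 2 * 2 ^ k * (2 * k) ^ 2 / (n : ℝ) ^ 2 := by
      rw [div_pow]; ring
    rw [hrw, ← add_div]
    apply div_le_div_of_nonneg_right _ (by positivity)
    · nlinarith [sq_nonneg (k:ℝ)]
end
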